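/- Let M be a KGinv-model (respectively, a KGinvF-model), w a world of M, and φ ∈ L_inv. Then there is a tree-like KGinv-model (respectively, KGinvF-model) M̂ with root ŵ such that the height of M̂ is at most |φ| and the value of φ at ŵ in M̂ equals the value of φ at w in M. -/

import Mathlib

noncomputable def Gimp (x y : ℝ) : ℝ := if x ≤ y then 1 else y

inductive Fml : Type
  | var : ℕ → Fml
  | inv : Fml → Fml
  | and : Fml → Fml → Fml
  | imp : Fml → Fml → Fml
  | box : Fml → Fml
  | dia : Fml → Fml
  deriving DecidableEq

noncomputable def Fml.eval {W : Type} (R : W → W → ℝ) (v : ℕ → W → ℝ) : Fml → W → ℝ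
  | .var p, w => v p w
  | .inv φ, w => 1 - Fml.eval R v φ w
  | .and φ χ, w => min (Fml.eval R v φ w) (Fml.eval R v χ w)
  | .imp φ χ, w => Gimp (Fml.eval R v φ w) (Fml.eval R v χ w)
  | .box φ, w => sInf (Set.range fun w' => Gimp (R w w') (Fml.eval R v φ w'))
  | .dia φ, w => sSup (Set.range fun w' => min (R w w') (Fml.eval R v φ w'))

def KGinvValid {W : Type} (R : W → W → ℝ) (φ : Fml) : Prop :=
  ∀ v : ℕ → W → ℝ, (∀ p w, v p w ∈ Set.Icc (0:ℝ) 1) → ∀ w : W, Fml.eval R v φ w = 1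

/-- An F-model: the data of a fuzzy frame with finitely many admissible modal values
at each state, together with a valuation. -/
structure FModel (W : Type) where
  R : W → W → ℝ
  T : W → Set ℝ
  v : ℕ → W → ℝ

/-- The conditions on the data of an F-model. -/
def FModel.Good {W : Type} (M : FModel W) : Prop :=
  (∀ w w', M.R w w' ∈ Set.Icc (0:ℝ) 1) ∧
  (∀ w, (M.T w).Finite) ∧
  (∀ w, M.T w ⊆ Set.Icc (0:ℝ) 1) ∧
  (∀ w, (0:ℝ) ∈ M.T w ∧ (1:ℝ) ∈ M.T w) ∧
  (∀ p w, M.v p w ∈ Set.Icc (0:ℝ) 1)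

noncomputable def FModel.eval {W : Type} (M : FModel W) : Fml → W → ℝ
  | .var p, w => M.v p w
  | .inv φ, w => 1 - FModel.eval M φ w
  | .and φ χ, w => min (FModel.eval M φ w) (FModel.eval M χ w)
  | .imp φ χ, w => Gimp (FModel.eval M φ w) (FModel.eval M χ w)
  | .box φ, w =>
      sSup {x | x ∈ M.T w ∧
        x ≤ sInf (Set.range fun w' => Gimp (M.R w w') (FModel.eval M φ w'))}
  | .dia φ, w =>
      sInf {x | x ∈ M.T w ∧
        sSup (Set.range fun w' => min (M.R w w') (FModel.eval M φ w')) ≤ x}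

/-- The accessibility graph of a fuzzy relation. -/
def Epos {W : Type} (R : W → W → ℝ) : W → W → Prop := fun a b => 0 < R a b

/-- The directed graph E on W is a tree with root r. -/
def IsTreeLike {W : Type} (E : W → W → Prop) (r : W) : Prop :=
  (∀ w, Relation.ReflTransGen E r w) ∧
  (∀ w, ¬ E w r) ∧
  (∀ u u' w, E u w → E u' w → u = u') ∧
  (∀ w, ¬ Relation.TransGen E w w)

/-- Every E-path starting at the root r has length at most n. -/
def HeightLE {W : Type} (E : W → W → Prop) (r : W) (n : ℕ) : Prop :=
  ∀ (k : ℕ) (f : ℕ → W), f 0 = r → (∀ i, i < k → E (f i) (f (i+1))) → k ≤ n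

/-- The number of symbols of a formula. -/
def Fml.size : Fml → ℕ
  | .var _ => 1
  | .inv φ => φ.size + 1
  | .and φ χ => φ.size + χ.size + 1
  | .imp φ χ => φ.size + χ.size + 1
  | .box φ => φ.size + 1
  | .dia φ => φ.size + 1

/-! Unravelling a model from `w` into the tree of its `R`-paths of length at most `n` keeps the
value of every formula at a path whose length plus the size of the formula is at most `n`: a
modal step from a path of length `k` consults only its one-step extensions, which are in
bijection with the `R`-successors of its endpoint, and every other world contributes the
neutral value (`1` to an infimum of implications, `0` to a supremum of minima). Both semantics
are handled at once, the F-semantics differing only by rounding the modal values into `T w`. -/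

open Set

lemma Gimp_mem_Icc (x : ℝ) {y : ℝ} (hy : y ∈ Icc (0 : ℝ) 1) :
    Gimp x y ∈ Icc (0 : ℝ) 1 := by
  unfold Gimp
  split_ifs
  exacts [⟨zero_le_one, le_rfl⟩, hy]

lemma Gimp_zero_left {y : ℝ} (hy : 0 ≤ y) : Gimp 0 y = 1 := if_pos hy

section UnitInterval

variable {ι κ : Type*} {f : ι → ℝ} {g : κ → ℝ}

lemma iInf_mem_Icc_zero_one (hf : ∀ i, f i ∈ Icc (0 : ℝ) 1) :
    ⨅ i, f i ∈ Icc (0 : ℝ) 1 := by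
  refine ⟨Real.iInf_nonneg fun i => (hf i).1, ?_⟩
  rcases isEmpty_or_nonempty ι with hι | ⟨⟨i⟩⟩
  · simp
  · exact ciInf_le_of_le ⟨0, forall_mem_range.2 fun i => (hf i).1⟩ i (hf i).2

lemma iSup_mem_Icc_zero_one (hf : ∀ i, f i ∈ Icc (0 : ℝ) 1) :
    ⨆ i, f i ∈ Icc (0 : ℝ) 1 := by
  refine ⟨?_, Real.iSup_le (fun i => (hf i).2) zero_le_one⟩
  rcases isEmpty_or_nonempty ι with hι | ⟨⟨i⟩⟩
  · simp
  · exact le_ciSup_of_le ⟨1, forall_mem_range.2 fun i => (hf i).2⟩ i (hf i).1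

lemma iInf_le_iInf_of_forall_eq_one_or_exists [Nonempty ι]
    (hg : ∀ j, g j ∈ Icc (0 : ℝ) 1) (h : ∀ i, f i = 1 ∨ ∃ j, g j = f i) :
    ⨅ j, g j ≤ ⨅ i, f i := by
  refine le_ciInf fun i => ?_
  rcases h i with hi | ⟨j, hj⟩
  · exact hi ▸ (iInf_mem_Icc_zero_one hg).2
  · exact hj ▸ ciInf_le ⟨0, forall_mem_range.2 fun j => (hg j).1⟩ j

lemma iSup_le_iSup_of_forall_eq_zero_or_exists [Nonempty ι]
    (hg : ∀ j, g j ∈ Icc (0 : ℝ) 1) (h : ∀ i, f i = 0 ∨ ∃ j, g j = f i) :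
    ⨆ i, f i ≤ ⨆ j, g j := by
  refine ciSup_le fun i => ?_
  rcases h i with hi | ⟨j, hj⟩
  · exact hi ▸ (iSup_mem_Icc_zero_one hg).1
  · exact hj ▸ le_ciSup ⟨1, forall_mem_range.2 fun j => (hg j).2⟩ j

end UnitInterval

noncomputable def Fml.roundedEval {W : Type} (R : W → W → ℝ) (v : ℕ → W → ℝ)
    (rdBox rdDia : W → ℝ → ℝ) : Fml → W → ℝ
  | .var p, w => v p w
  | .inv φ, w => 1 - Fml.roundedEval R v rdBox rdDia φ w
  | .and φ χ, w =>
      min (Fml.roundedEval R v rdBox rdDia φ w) (Fml.roundedEval R v rdBox rdDia χ w)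
  | .imp φ χ, w =>
      Gimp (Fml.roundedEval R v rdBox rdDia φ w) (Fml.roundedEval R v rdBox rdDia χ w)
  | .box φ, w => rdBox w (⨅ w', Gimp (R w w') (Fml.roundedEval R v rdBox rdDia φ w'))
  | .dia φ, w => rdDia w (⨆ w', min (R w w') (Fml.roundedEval R v rdBox rdDia φ w'))

lemma Fml.eval_eq_roundedEval {W : Type} (R : W → W → ℝ) (v : ℕ → W → ℝ) :
    Fml.eval R v = Fml.roundedEval R v (fun _ => id) (fun _ => id) := by
  funext φ
  induction φ <;> simp only [Fml.eval, Fml.roundedEval, id, *] <;> rfl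

noncomputable def roundDown (T : Set ℝ) (s : ℝ) : ℝ := sSup {x | x ∈ T ∧ x ≤ s}

noncomputable def roundUp (T : Set ℝ) (s : ℝ) : ℝ := sInf {x | x ∈ T ∧ s ≤ x}

lemma mapsTo_roundDown {T : Set ℝ} (hT : T ⊆ Icc 0 1) (h0 : (0 : ℝ) ∈ T) :
    MapsTo (roundDown T) (Icc 0 1) (Icc 0 1) := fun s hs => by
  have h0s : (0 : ℝ) ∈ {x | x ∈ T ∧ x ≤ s} := ⟨h0, hs.1⟩
  exact ⟨le_csSup ⟨1, fun x hx => (hT hx.1).2⟩ h0s,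
    csSup_le ⟨0, h0s⟩ fun x hx => (hT hx.1).2⟩

lemma mapsTo_roundUp {T : Set ℝ} (hT : T ⊆ Icc 0 1) (h1 : (1 : ℝ) ∈ T) :
    MapsTo (roundUp T) (Icc 0 1) (Icc 0 1) := fun s hs => by
  have h1s : (1 : ℝ) ∈ {x | x ∈ T ∧ s ≤ x} := ⟨h1, hs.2⟩
  exact ⟨le_csInf ⟨1, h1s⟩ fun x hx => (hT hx.1).1,
    csInf_le ⟨0, fun x hx => (hT hx.1).1⟩ h1s⟩

lemma FModel.eval_eq_roundedEval {W : Type} (M : FModel W) :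
    M.eval = Fml.roundedEval M.R M.v (fun w => roundDown (M.T w)) (fun w => roundUp (M.T w)) := by
  funext φ
  induction φ <;> simp only [FModel.eval, Fml.roundedEval, *] <;> rfl

lemma Fml.roundedEval_mem_Icc {W : Type} {R : W → W → ℝ} {v : ℕ → W → ℝ}
    {rdBox rdDia : W → ℝ → ℝ}
    (hR : ∀ a b, R a b ∈ Icc (0 : ℝ) 1) (hv : ∀ p a, v p a ∈ Icc (0 : ℝ) 1)
    (hBox : ∀ a, MapsTo (rdBox a) (Icc 0 1) (Icc 0 1))
    (hDia : ∀ a, MapsTo (rdDia a) (Icc 0 1) (Icc 0 1)) :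
    ∀ (φ : Fml) (a : W), Fml.roundedEval R v rdBox rdDia φ a ∈ Icc (0 : ℝ) 1
  | .var p, a => hv p a
  | .inv φ, a => by
    have := Fml.roundedEval_mem_Icc hR hv hBox hDia φ a
    simp only [Fml.roundedEval, mem_Icc] at this ⊢
    constructor <;> linarith
  | .and φ χ, a => by
    have hφ := Fml.roundedEval_mem_Icc hR hv hBox hDia φ a
    have hχ := Fml.roundedEval_mem_Icc hR hv hBox hDia χ a
    exact ⟨le_min hφ.1 hχ.1, (min_le_left _ _).trans hφ.2⟩
  | .imp φ χ, a => Gimp_mem_Icc _ (Fml.roundedEval_mem_Icc hR hv hBox hDia χ a)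
  | .box φ, a => hBox a <| iInf_mem_Icc_zero_one fun b =>
      Gimp_mem_Icc _ (Fml.roundedEval_mem_Icc hR hv hBox hDia φ b)
  | .dia φ, a => hDia a <| iSup_mem_Icc_zero_one fun b =>
      have hφ := Fml.roundedEval_mem_Icc hR hv hBox hDia φ b
      ⟨le_min (hR a b).1 hφ.1, (min_le_right _ _).trans hφ.2⟩

/-- `IsRevPath R w [aₖ, …, a₁]` says that `w, a₁, …, aₖ` is a path along `R > 0`. -/
def IsRevPath {W : Type} (R : W → W → ℝ) (w : W) : List W → Prop
  | [] => True
  | a :: l => 0 < R (l.headD w) a ∧ IsRevPath R w l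

def Unravel {W : Type} (R : W → W → ℝ) (w : W) (n : ℕ) : Type :=
  {l : List W // IsRevPath R w l ∧ l.length ≤ n}

namespace Unravel

variable {W : Type} {R : W → W → ℝ} {w : W} {n : ℕ}

def root (R : W → W → ℝ) (w : W) (n : ℕ) : Unravel R w n := ⟨[], trivial, Nat.zero_le n⟩

instance : Nonempty (Unravel R w n) := ⟨root R w n⟩

def last (p : Unravel R w n) : W := p.1.headD w

def depth (p : Unravel R w n) : ℕ := p.1.length

def cons (p : Unravel R w n) (a : W) (ha : 0 < R p.last a) (hp : p.depth < n) :
    Unravel R w n :=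
  ⟨a :: p.1, ⟨ha, p.2.1⟩, hp⟩

open Classical in
noncomputable def rel (R : W → W → ℝ) (w : W) (n : ℕ) (p q : Unravel R w n) : ℝ :=
  if ∃ a, q.1 = a :: p.1 then R p.last q.last else 0

lemma rel_mem_Icc (hR : ∀ a b, R a b ∈ Icc (0 : ℝ) 1) (p q : Unravel R w n) :
    rel R w n p q ∈ Icc (0 : ℝ) 1 := by
  unfold rel
  split_ifs
  exacts [hR _ _, ⟨le_rfl, zero_le_one⟩]

lemma rel_cons (p : Unravel R w n) (a : W) (ha : 0 < R p.last a) (hp : p.depth < n) :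
    rel R w n p (p.cons a ha hp) = R p.last a :=
  if_pos ⟨a, rfl⟩

lemma rel_eq_zero_or_eq_cons (p q : Unravel R w n) :
    rel R w n p q = 0 ∨ ∃ a ha hp, q = p.cons a ha hp := by
  by_cases h : ∃ a, q.1 = a :: p.1
  · obtain ⟨a, ha⟩ := h
    have hq := q.2
    rw [ha] at hq
    exact Or.inr ⟨a, hq.1.1, hq.2, Subtype.ext ha⟩
  · exact Or.inl (if_neg h)

lemma depth_of_rel_pos {p q : Unravel R w n} (h : 0 < rel R w n p q) :
    q.depth = p.depth + 1 := by
  rcases rel_eq_zero_or_eq_cons p q with h0 | ⟨_, _, _, rfl⟩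
  · exact absurd h0 h.ne'
  · rfl

lemma depth_lt_of_transGen {p q : Unravel R w n}
    (h : Relation.TransGen (Epos (rel R w n)) p q) : p.depth < q.depth := by
  induction h with
  | single h => rw [depth_of_rel_pos h]; omega
  | tail _ h ih => rw [depth_of_rel_pos h]; omega

lemma reflTransGen_root (q : Unravel R w n) :
    Relation.ReflTransGen (Epos (rel R w n)) (root R w n) q := by
  obtain ⟨l, hl, hlen⟩ := q
  induction l with
  | nil => exact Relation.ReflTransGen.refl
  | cons a l ih =>
    obtain ⟨ha, hl⟩ := hl
    let p : Unravel R w n := ⟨l, hl, (Nat.le_succ _).trans hlen⟩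
    exact (ih hl p.2.2).tail (ha.trans_eq (rel_cons p a ha hlen).symm)

theorem isTreeLike : IsTreeLike (Epos (rel R w n)) (root R w n) := by
  refine ⟨reflTransGen_root, fun q h => ?_, fun u u' q hu hu' => ?_, fun q h => ?_⟩
  · have := depth_of_rel_pos h
    simp [depth, root] at this
  · rcases rel_eq_zero_or_eq_cons u q with h0 | ⟨a, ha, hp, rfl⟩
    · exact absurd h0 (ne_of_gt hu)
    rcases rel_eq_zero_or_eq_cons u' (u.cons a ha hp) with h0 | ⟨_, _, _, h⟩
    · exact absurd h0 (ne_of_gt hu')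
    exact Subtype.ext (List.cons.inj (congrArg Subtype.val h)).2
  · exact lt_irrefl _ (depth_lt_of_transGen h)

theorem heightLE : HeightLE (Epos (rel R w n)) (root R w n) n := by
  intro k f hf0 hf
  have hdepth : ∀ i ≤ k, (f i).depth = i := by
    intro i
    induction i with
    | zero => intro _; rw [hf0]; rfl
    | succ i ih => intro hi; rw [depth_of_rel_pos (hf i (by omega)), ih (by omega)]
  exact hdepth k le_rfl ▸ (f k).2.2

lemma rel_values_correspond (hR : ∀ a b, 0 ≤ R a b) {F : ℝ → ℝ → ℝ} {e : ℝ}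
    (hF : ∀ y, 0 ≤ y → F 0 y = e) {p : Unravel R w n} (hp : p.depth < n)
    {f : Unravel R w n → ℝ} {g : W → ℝ} (hf : ∀ q, 0 ≤ f q) (hg : ∀ a, 0 ≤ g a)
    (hfg : ∀ a ha, f (p.cons a ha hp) = g a) :
    (∀ q, F (rel R w n p q) (f q) = e ∨
      ∃ a, F (R p.last a) (g a) = F (rel R w n p q) (f q)) ∧
    (∀ a, F (R p.last a) (g a) = e ∨
      ∃ q, F (rel R w n p q) (f q) = F (R p.last a) (g a)) := by
  constructor
  · intro q
    rcases rel_eq_zero_or_eq_cons p q with h0 | ⟨a, ha, _, rfl⟩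
    · exact Or.inl (by rw [h0, hF _ (hf _)])
    · exact Or.inr ⟨a, by rw [rel_cons, hfg]⟩
  · intro a
    rcases (hR p.last a).eq_or_lt with h0 | ha
    · exact Or.inl (by rw [← h0, hF _ (hg _)])
    · exact Or.inr ⟨p.cons a ha hp, by rw [rel_cons, hfg]⟩

variable {v : ℕ → W → ℝ} {rdBox rdDia : W → ℝ → ℝ}

theorem roundedEval_eq (hR : ∀ a b, R a b ∈ Icc (0 : ℝ) 1)
    (hv : ∀ p a, v p a ∈ Icc (0 : ℝ) 1)
    (hBox : ∀ a, MapsTo (rdBox a) (Icc 0 1) (Icc 0 1))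
    (hDia : ∀ a, MapsTo (rdDia a) (Icc 0 1) (Icc 0 1)) :
    ∀ (φ : Fml) (p : Unravel R w n), φ.size + p.depth ≤ n →
      Fml.roundedEval (rel R w n) (fun i q => v i q.last) (fun q => rdBox q.last)
        (fun q => rdDia q.last) φ p = Fml.roundedEval R v rdBox rdDia φ p.last
  | .var _, _, _ => rfl
  | .inv φ, p, h => by
    simp only [Fml.size] at h
    simp only [Fml.roundedEval, roundedEval_eq hR hv hBox hDia φ p (by omega)]
  | .and φ χ, p, h => by
    simp only [Fml.size] at h
    simp only [Fml.roundedEval, roundedEval_eq hR hv hBox hDia φ p (by omega),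
      roundedEval_eq hR hv hBox hDia χ p (by omega)]
  | .imp φ χ, p, h => by
    simp only [Fml.size] at h
    simp only [Fml.roundedEval, roundedEval_eq hR hv hBox hDia φ p (by omega),
      roundedEval_eq hR hv hBox hDia χ p (by omega)]
  | .box φ, p, h => by
    simp only [Fml.size] at h
    have hp : p.depth < n := by omega
    have hE := Fml.roundedEval_mem_Icc hR hv hBox hDia φ
    have hE' := Fml.roundedEval_mem_Icc (rel_mem_Icc (w := w) (n := n) hR)
      (fun i q => hv i q.last) (fun q => hBox q.last) (fun q => hDia q.last) φ
    obtain ⟨hto, hfrom⟩ := rel_values_correspond (fun a b => (hR a b).1)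
      (fun y hy => Gimp_zero_left hy) hp (fun q => (hE' q).1) (fun a => (hE a).1)
      fun a ha => roundedEval_eq hR hv hBox hDia φ (p.cons a ha hp)
        (show φ.size + (p.depth + 1) ≤ n by omega)
    have : Nonempty W := ⟨w⟩
    simp only [Fml.roundedEval]
    congr 1
    exact le_antisymm
      (iInf_le_iInf_of_forall_eq_one_or_exists (fun q => Gimp_mem_Icc _ (hE' q)) hfrom)
      (iInf_le_iInf_of_forall_eq_one_or_exists (fun a => Gimp_mem_Icc _ (hE a)) hto)
  | .dia φ, p, h => by
    simp only [Fml.size] at h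
    have hp : p.depth < n := by omega
    have hE := Fml.roundedEval_mem_Icc hR hv hBox hDia φ
    have hE' := Fml.roundedEval_mem_Icc (rel_mem_Icc (w := w) (n := n) hR)
      (fun i q => hv i q.last) (fun q => hBox q.last) (fun q => hDia q.last) φ
    obtain ⟨hto, hfrom⟩ := rel_values_correspond (fun a b => (hR a b).1)
      (fun y hy => min_eq_left hy) hp (fun q => (hE' q).1) (fun a => (hE a).1)
      fun a ha => roundedEval_eq hR hv hBox hDia φ (p.cons a ha hp)
        (show φ.size + (p.depth + 1) ≤ n by omega)
    have : Nonempty W := ⟨w⟩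
    simp only [Fml.roundedEval]
    congr 1
    exact le_antisymm
      (iSup_le_iSup_of_forall_eq_zero_or_exists
        (fun a => ⟨le_min (hR _ a).1 (hE a).1, (min_le_right _ _).trans (hE a).2⟩) hto)
      (iSup_le_iSup_of_forall_eq_zero_or_exists
        (fun q => ⟨le_min (rel_mem_Icc hR p q).1 (hE' q).1,
          (min_le_right _ _).trans (hE' q).2⟩) hfrom)

end Unravel

noncomputable def FModel.unravel {W : Type} (M : FModel W) (w : W) (n : ℕ) :
    FModel (Unravel M.R w n) where
  R := Unravel.rel M.R w n
  T q := M.T q.last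
  v i q := M.v i q.last

lemma FModel.Good.unravel {W : Type} {M : FModel W} (hM : M.Good) (w : W) (n : ℕ) :
    (M.unravel w n).Good := by
  obtain ⟨hR, hTfin, hT, hT01, hv⟩ := hM
  exact ⟨Unravel.rel_mem_Icc hR, fun q => hTfin _, fun q => hT _, fun q => hT01 _,
    fun i q => hv i _⟩

/-- Every pointed model (plain or F) can be replaced by a tree-like model of height
at most |φ| giving φ the same value at the root. -/
theorem statement15 :
    (∀ (W : Type) (_ : Nonempty W) (R : W → W → ℝ),
      (∀ w w', R w w' ∈ Set.Icc (0:ℝ) 1) →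
      ∀ v : ℕ → W → ℝ, (∀ p w, v p w ∈ Set.Icc (0:ℝ) 1) →
      ∀ (w : W) (φ : Fml),
        ∃ (W' : Type) (_ : Nonempty W') (R' : W' → W' → ℝ) (v' : ℕ → W' → ℝ) (r : W'),
          (∀ a b, R' a b ∈ Set.Icc (0:ℝ) 1) ∧ (∀ p a, v' p a ∈ Set.Icc (0:ℝ) 1) ∧
          IsTreeLike (Epos R') r ∧ HeightLE (Epos R') r φ.size ∧
          Fml.eval R' v' φ r = Fml.eval R v φ w) ∧
    (∀ (W : Type) (_ : Nonempty W) (M : FModel W), M.Good →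
      ∀ (w : W) (φ : Fml),
        ∃ (W' : Type) (_ : Nonempty W') (M' : FModel W') (r : W'),
          M'.Good ∧ IsTreeLike (Epos M'.R) r ∧ HeightLE (Epos M'.R) r φ.size ∧
          M'.eval φ r = M.eval φ w) := by
  refine ⟨fun W _ R hR v hv w φ => ?_, fun W _ M hM w φ => ?_⟩
  · refine ⟨Unravel R w φ.size, inferInstance, Unravel.rel R w φ.size, fun i q => v i q.last,
      Unravel.root R w φ.size, Unravel.rel_mem_Icc hR, fun i q => hv i q.last,
      Unravel.isTreeLike, Unravel.heightLE, ?_⟩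
    rw [Fml.eval_eq_roundedEval, Fml.eval_eq_roundedEval]
    exact Unravel.roundedEval_eq hR hv (fun _ => mapsTo_id _) (fun _ => mapsTo_id _) φ _ le_rfl
  · refine ⟨Unravel M.R w φ.size, inferInstance, M.unravel w φ.size,
      Unravel.root M.R w φ.size, hM.unravel w φ.size, Unravel.isTreeLike, Unravel.heightLE, ?_⟩
    obtain ⟨hR, -, hT, hT01, hv⟩ := hM
    rw [FModel.eval_eq_roundedEval, FModel.eval_eq_roundedEval]
    exact Unravel.roundedEval_eq hR hv (fun a => mapsTo_roundDown (hT a) (hT01 a).1)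
      (fun a => mapsTo_roundUp (hT a) (hT01 a).2) φ _ le_rfl
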